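/- arXiv:2204.04717 — 2 statements merged into one kernel-verified Lean document; each statement's English description precedes it below -/
import Mathlib

section
/- Let G = (V,E) be a finite weighted graph and suppose every edge e ∈ E is assigned a reduced weight w'(e) ≥ 0 and arrival time t(e) ∈ ℕ (all distinct), such that w(e) ≤ (1+ε)·Σ_{e' ∈ P(e)} w'(e'), where P(e) = { e' : e' shares a vertex with e or e' = e, and t(e') ≤ t(e) }. Let M be a matching in G and F ⊆ E a set of edges each of which is adjacent to at most one edge of M. Then Σ_{e∈M} w(e) ≤ (1+ε)·( 2·Σ_{e∈E} w'(e) − Σ_{e∈F∖M} w'(e) ). -/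
open scoped Classical in
private lemma helper_card_le_two {V : Type*} [DecidableEq V]
    (M : Finset (Sym2 V))
    (hmatching : ∀ e ∈ M, ∀ f ∈ M, e ≠ f → ∀ v : V, ¬(v ∈ e ∧ v ∈ f))
    (e' : Sym2 V) :
    (M.filter (fun m => ∃ v : V, v ∈ e' ∧ v ∈ m)).card ≤ 2 := by
  induction e' using Sym2.ind with
  | _ a b =>
    have h2 : ({a, b} : Finset V).card ≤ 2 := by
      refine le_trans (Finset.card_insert_le _ _) ?_
      simp
    refine le_trans (Finset.card_le_card_of_injOn
      (fun m => if a ∈ m then a else b) ?_ ?_) h2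
    · intro m hm
      by_cases h : a ∈ m <;> simp [h]
    · intro m1 hm1 m2 hm2 hfm
      simp only [Finset.coe_filter, Set.mem_setOf_eq] at hm1 hm2
      obtain ⟨hm1M, v1, hv1e, hv1m⟩ := hm1
      obtain ⟨hm2M, v2, hv2e, hv2m⟩ := hm2
      by_contra hne
      have key : ∀ v : V, v ∈ m1 → v ∈ m2 → False := fun v h1 h2 =>
        hmatching m1 hm1M m2 hm2M hne v ⟨h1, h2⟩
      rw [Sym2.mem_iff] at hv1e hv2e
      have w1 : a ∈ m1 ∨ b ∈ m1 := by
        rcases hv1e with h | h <;> subst h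
        · exact Or.inl hv1m
        · exact Or.inr hv1m
      have w2 : a ∈ m2 ∨ b ∈ m2 := by
        rcases hv2e with h | h <;> subst h
        · exact Or.inl hv2m
        · exact Or.inr hv2m
      simp only [] at hfm
      by_cases h1 : a ∈ m1 <;> by_cases h2 : a ∈ m2
      · exact key a h1 h2
      · rw [if_pos h1, if_neg h2] at hfm
        rcases w2 with hb | hb
        · exact h2 hb
        · exact h2 (by rw [hfm]; exact hb)
      · rw [if_neg h1, if_pos h2] at hfm
        rcases w1 with hb | hb
        · exact h1 hb
        · exact h1 (by rw [← hfm]; exact hb)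
      · rcases w1 with hb1 | hb1
        · exact h1 hb1
        · rcases w2 with hb2 | hb2
          · exact h2 hb2
          · exact key b hb1 hb2

open scoped Classical in
/-- Abstract content of Lemma 9 (analogue of Lemma 14 of Biabani et al.):
bounding the weight of a matching via reduced weights `w'` and the
prefix-neighborhoods `P(e)`. -/
theorem stmt_7 {V : Type*} [DecidableEq V]
    (E : Finset (Sym2 V)) (w w' : Sym2 V → ℝ) (t : Sym2 V → ℕ) (ε : ℝ)
    (hε : 0 ≤ ε) (hw : ∀ e ∈ E, 0 ≤ w e) (hw' : ∀ e ∈ E, 0 ≤ w' e)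
    (ht : ∀ e ∈ E, ∀ f ∈ E, e ≠ f → t e ≠ t f)
    (hbound : ∀ e ∈ E,
      w e ≤ (1 + ε) *
        ∑ e' ∈ E.filter (fun e' => (∃ v : V, v ∈ e' ∧ v ∈ e) ∧ t e' ≤ t e), w' e')
    (M : Finset (Sym2 V)) (hME : M ⊆ E)
    (hmatching : ∀ e ∈ M, ∀ f ∈ M, e ≠ f → ∀ v : V, ¬(v ∈ e ∧ v ∈ f))
    (F : Finset (Sym2 V)) (hFE : F ⊆ E)
    (hF : ∀ f ∈ F, (M.filter (fun m => ∃ v : V, v ∈ m ∧ v ∈ f)).card ≤ 1) :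
    ∑ e ∈ M, w e ≤ (1 + ε) * (2 * ∑ e ∈ E, w' e - ∑ e ∈ F \ M, w' e) := by
  classical
  -- Step 1: apply the bound `hbound` to each matching edge.
  have step1 : ∑ e ∈ M, w e ≤ (1 + ε) *
      ∑ e ∈ M, ∑ e' ∈ E.filter
        (fun e' => (∃ v : V, v ∈ e' ∧ v ∈ e) ∧ t e' ≤ t e), w' e' := by
    rw [Finset.mul_sum]
    exact Finset.sum_le_sum fun e he => hbound e (hME he)
  -- Step 2: swap the order of summation.
  have step2 : ∑ e ∈ M, ∑ e' ∈ E.filter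
        (fun e' => (∃ v : V, v ∈ e' ∧ v ∈ e) ∧ t e' ≤ t e), w' e'
      = ∑ e' ∈ E, ((M.filter
        (fun e => (∃ v : V, v ∈ e' ∧ v ∈ e) ∧ t e' ≤ t e)).card : ℝ) * w' e' := by
    simp_rw [Finset.sum_filter]
    rw [Finset.sum_comm]
    refine Finset.sum_congr rfl fun e' _ => ?_
    rw [← Finset.sum_filter, Finset.sum_const, nsmul_eq_mul]
  -- Step 3: pointwise counting bound.
  have step3 : ∑ e' ∈ E, ((M.filter
        (fun e => (∃ v : V, v ∈ e' ∧ v ∈ e) ∧ t e' ≤ t e)).card : ℝ) * w' e'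
      ≤ ∑ e' ∈ E, (if e' ∈ F \ M then (1 : ℝ) else 2) * w' e' := by
    refine Finset.sum_le_sum fun e' he' => ?_
    refine mul_le_mul_of_nonneg_right ?_ (hw' e' he')
    by_cases hFM : e' ∈ F \ M
    · rw [if_pos hFM]
      have hsub : M.filter (fun e => (∃ v : V, v ∈ e' ∧ v ∈ e) ∧ t e' ≤ t e)
          ⊆ M.filter (fun m => ∃ v : V, v ∈ m ∧ v ∈ e') := by
        intro m hm
        rw [Finset.mem_filter] at hm ⊢
        obtain ⟨hmM, ⟨v, hv1, hv2⟩, -⟩ := hm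
        exact ⟨hmM, v, hv2, hv1⟩
      have := le_trans (Finset.card_le_card hsub)
        (hF e' (Finset.mem_sdiff.mp hFM).1)
      exact_mod_cast this
    · rw [if_neg hFM]
      have hsub : M.filter (fun e => (∃ v : V, v ∈ e' ∧ v ∈ e) ∧ t e' ≤ t e)
          ⊆ M.filter (fun m => ∃ v : V, v ∈ e' ∧ v ∈ m) := by
        intro m hm
        rw [Finset.mem_filter] at hm ⊢
        exact ⟨hm.1, hm.2.1⟩
      have := le_trans (Finset.card_le_card hsub)
        (helper_card_le_two M hmatching e')
      exact_mod_cast this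
  -- Step 4: evaluate the right-hand side.
  have step4 : ∑ e' ∈ E, (if e' ∈ F \ M then (1 : ℝ) else 2) * w' e'
      = 2 * ∑ e ∈ E, w' e - ∑ e ∈ F \ M, w' e := by
    have h1 : ∀ e' ∈ E, (if e' ∈ F \ M then (1 : ℝ) else 2) * w' e'
        = 2 * w' e' - (if e' ∈ F \ M then w' e' else 0) := by
      intro e' _
      by_cases h : e' ∈ F \ M <;> simp [h] <;> ring
    rw [Finset.sum_congr rfl h1, Finset.sum_sub_distrib, ← Finset.mul_sum,
      Finset.sum_ite_mem, Finset.inter_eq_right.mpr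
        (le_trans (Finset.sdiff_subset) hFE)]
  calc ∑ e ∈ M, w e
      ≤ (1 + ε) * ∑ e ∈ M, ∑ e' ∈ E.filter
        (fun e' => (∃ v : V, v ∈ e' ∧ v ∈ e) ∧ t e' ≤ t e), w' e' := step1
    _ ≤ (1 + ε) * (2 * ∑ e ∈ E, w' e - ∑ e ∈ F \ M, w' e) := by
        rw [step2]
        refine mul_le_mul_of_nonneg_left ?_ (by linarith)
        rw [← step4]; exact step3
end

section
/- In the vertex potential process (Paz–Schwartzman update rule with parameter ε ≥ 0), after processing the entire stream S, every edge e = {u,v} in S satisfies w(e) ≤ (1+ε)·(φ_S(u) + φ_S(v)), where φ_S denotes the final potentials. -/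
/-! Right after an edge is processed the inequality holds for it, either because the edge was
rejected or because its endpoints were just raised. Since weights are nonnegative, later steps
never decrease a potential, so the inequality survives to the end of the stream. -/

open scoped Classical

/-- One step of the Paz–Schwartzman vertex potential process. -/
noncomputable def psStep {V : Type*} [DecidableEq V] (ε : ℝ) (φ : V → ℝ)
    (e : (V × V) × ℝ) : V → ℝ :=
  if (1 + ε) * (φ e.1.1 + φ e.1.2) ≤ e.2 then
    fun v => if v = e.1.1 ∨ v = e.1.2 then φ v + (e.2 - φ e.1.1 - φ e.1.2) else φ v
  else φ

/-- Potentials after processing a stream of weighted edges. -/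
noncomputable def psPot {V : Type*} [DecidableEq V] (ε : ℝ)
    (l : List ((V × V) × ℝ)) : V → ℝ :=
  l.foldl (psStep ε) (fun _ => 0)

/-- Reduced weight assigned to an edge arriving when the potentials are `φ`. -/
noncomputable def psRed {V : Type*} [DecidableEq V] (ε : ℝ) (φ : V → ℝ)
    (e : (V × V) × ℝ) : ℝ :=
  if (1 + ε) * (φ e.1.1 + φ e.1.2) ≤ e.2 then e.2 - φ e.1.1 - φ e.1.2 else 0

section

variable {V : Type*} [DecidableEq V] {ε : ℝ}

-- When the edge fires with endpoint sum `s`, the increment `w - s` is at least `ε s`, and positive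
-- if `s < 0`.
lemma le_psStep (hε : 0 ≤ ε) (φ : V → ℝ) {e : (V × V) × ℝ} (hw : 0 ≤ e.2) (v : V) :
    φ v ≤ psStep ε φ e v := by
  unfold psStep
  split_ifs with hfire
  · dsimp only
    split_ifs
    · rcases le_or_gt 0 (φ e.1.1 + φ e.1.2) with hs | hs <;> nlinarith
    · exact le_rfl
  · exact le_rfl

lemma le_foldl_psStep (hε : 0 ≤ ε) {l : List ((V × V) × ℝ)} (hw : ∀ e ∈ l, 0 ≤ e.2)
    (φ : V → ℝ) (v : V) : φ v ≤ l.foldl (psStep ε) φ v := by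
  induction l generalizing φ with
  | nil => exact le_rfl
  | cons a l ih =>
    simp only [List.forall_mem_cons] at hw
    exact (le_psStep hε φ hw.1 v).trans (ih hw.2 _)

-- After a firing the endpoint sum is `2w - s` with `(1 + ε) s ≤ w`.
lemma weight_le_psStep (hε : 0 ≤ ε) (φ : V → ℝ) {e : (V × V) × ℝ} (hw : 0 ≤ e.2) :
    e.2 ≤ (1 + ε) * (psStep ε φ e e.1.1 + psStep ε φ e e.1.2) := by
  unfold psStep
  split_ifs with hfire
  · simp only [true_or, or_true, if_true]
    nlinarith
  · linarith

theorem weight_le_foldl_psStep (hε : 0 ≤ ε) {l : List ((V × V) × ℝ)}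
    (hw : ∀ e ∈ l, 0 ≤ e.2) (φ : V → ℝ) :
    ∀ e ∈ l, e.2 ≤ (1 + ε) * (l.foldl (psStep ε) φ e.1.1 + l.foldl (psStep ε) φ e.1.2) := by
  induction l generalizing φ with
  | nil => simp
  | cons a l ih =>
    simp only [List.forall_mem_cons] at hw ⊢
    refine ⟨?_, ih hw.2 _⟩
    calc a.2 ≤ (1 + ε) * (psStep ε φ a a.1.1 + psStep ε φ a a.1.2) :=
          weight_le_psStep hε φ hw.1
      _ ≤ (1 + ε) * (l.foldl (psStep ε) (psStep ε φ a) a.1.1 +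
            l.foldl (psStep ε) (psStep ε φ a) a.1.2) := by
          gcongr <;> exact le_foldl_psStep hε hw.2 _ _

end

theorem stmt_12_general {V : Type*} [DecidableEq V] (ε : ℝ) (hε : 0 ≤ ε)
    (l : List ((V × V) × ℝ))
    (hw : ∀ e ∈ l, 0 ≤ e.2) :
    ∀ e ∈ l, e.2 ≤ (1 + ε) * (psPot ε l e.1.1 + psPot ε l e.1.2) :=
  weight_le_foldl_psStep hε hw _

/-- Proposition 3 (Ghaffari–Wajc): after processing the whole stream, every
edge weight is bounded by `(1+ε)` times the sum of the final potentials of its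
endpoints. -/
theorem stmt_12 {V : Type*} [DecidableEq V] (ε : ℝ) (hε : 0 ≤ ε)
    (l : List ((V × V) × ℝ))
    (hloop : ∀ e ∈ l, e.1.1 ≠ e.1.2) (hw : ∀ e ∈ l, 0 ≤ e.2) :
    ∀ e ∈ l, e.2 ≤ (1 + ε) * (psPot ε l e.1.1 + psPot ε l e.1.2) :=
  stmt_12_general ε hε l hw
end
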